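/- If L : W → Γ is a positive weight function (L(s) > 0 for all s ∈ S), then a finite sequence (w_1,…,w_n) of elements of W is L-additive (L(w_1⋯w_n) = L(w_1)+⋯+L(w_n)) if and only if it is length-additive (ℓ(w_1⋯w_n) = ℓ(w_1)+⋯+ℓ(w_n)); that is, ℒ_L(W) = ℒ(W). -/

import Mathlib

/-!
Expand each `wᵢ` into a reduced word and concatenate: the result is a word `ω` in the simple
reflections with `π ω = w₁ ⋯ wₙ`, length `ℓ(w₁) + ⋯ + ℓ(wₙ)` and letter weights summing to
`L(w₁) + ⋯ + L(wₙ)`. So both additivity conditions say something about `ω` alone, and both are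
equivalent to `ω` being reduced: reading a word letter by letter, `L` adds up along ascents and
strictly drops at each descent, because `L(sᵢ) > 0`.
-/

namespace CoxeterSystem

variable {B W Γ : Type*} [Group W] {M : CoxeterMatrix B} {cs : CoxeterSystem M W}

def IsWeightFunction [Add Γ] (cs : CoxeterSystem M W) (L : W → Γ) : Prop :=
  ∀ u v : W, cs.length (u * v) = cs.length u + cs.length v → L (u * v) = L u + L v

namespace IsWeightFunction

variable [AddCommGroup Γ] {L : W → Γ}

theorem map_one (hL : cs.IsWeightFunction L) : L 1 = 0 := by
  simpa using hL 1 1 (by simp)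

theorem simple_mul_of_length_eq (hL : cs.IsWeightFunction L) {w : W} {i : B}
    (h : cs.length (cs.simple i * w) = cs.length w + 1) :
    L (cs.simple i * w) = L (cs.simple i) + L w :=
  hL _ _ (by rw [h, cs.length_simple, add_comm])

theorem wordProd_of_isReduced (hL : cs.IsWeightFunction L) {ω : List B}
    (hω : cs.IsReduced ω) : L (cs.wordProd ω) = (ω.map fun i => L (cs.simple i)).sum := by
  induction ω with
  | nil => simpa using hL.map_one
  | cons i ω ih =>
    have hred : cs.IsReduced ω := hω.drop 1
    have hlen : cs.length (cs.simple i * cs.wordProd ω) = cs.length (cs.wordProd ω) + 1 := by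
      rw [hred.eq]
      simpa [IsReduced, cs.wordProd_cons] using hω
    rw [cs.wordProd_cons, hL.simple_mul_of_length_eq hlen, ih hred, List.map_cons, List.sum_cons]

theorem exists_word_of_list (hL : cs.IsWeightFunction L) (l : List W) :
    ∃ ω : List B, cs.wordProd ω = l.prod ∧ ω.length = (l.map cs.length).sum ∧
      (ω.map fun i => L (cs.simple i)).sum = (l.map L).sum := by
  induction l with
  | nil => exact ⟨[], by simp⟩
  | cons w l ih =>
    obtain ⟨ω, hprod, hlen, hsum⟩ := ih
    obtain ⟨α, hα, rfl⟩ := cs.exists_isReduced w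
    refine ⟨α ++ ω, ?_, ?_, ?_⟩
    · rw [cs.wordProd_append, hprod, List.prod_cons]
    · rw [List.length_append, hlen, List.map_cons, List.sum_cons, hα.eq]
    · rw [List.map_append, List.sum_append, hsum, List.map_cons, List.sum_cons,
        hL.wordProd_of_isReduced hα]

variable [LinearOrder Γ] [IsOrderedAddMonoid Γ]

theorem simple_mul_lt_of_length_eq (hL : cs.IsWeightFunction L)
    (hpos : ∀ i : B, 0 < L (cs.simple i)) {w : W} {i : B}
    (h : cs.length (cs.simple i * w) + 1 = cs.length w) :
    L (cs.simple i * w) < L w := by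
  have hw : L w = L (cs.simple i) + L (cs.simple i * w) := by
    simpa using hL (cs.simple i) (cs.simple i * w)
      (by rw [cs.simple_mul_simple_cancel_left, cs.length_simple]; omega)
  exact hw ▸ lt_add_of_pos_left _ (hpos i)

theorem wordProd_le (hL : cs.IsWeightFunction L) (hpos : ∀ i : B, 0 < L (cs.simple i))
    (ω : List B) : L (cs.wordProd ω) ≤ (ω.map fun i => L (cs.simple i)).sum := by
  induction ω with
  | nil => simp [hL.map_one]
  | cons i ω ih =>
    rw [cs.wordProd_cons, List.map_cons, List.sum_cons]
    rcases cs.length_simple_mul (cs.wordProd ω) i with h | h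
    · rw [hL.simple_mul_of_length_eq h]
      exact add_le_add_right ih _
    · calc L (cs.simple i * cs.wordProd ω) ≤ L (cs.wordProd ω) :=
            (hL.simple_mul_lt_of_length_eq hpos h).le
        _ ≤ _ := ih
        _ ≤ _ := le_add_of_nonneg_left (hpos i).le

theorem wordProd_lt_of_not_isReduced (hL : cs.IsWeightFunction L)
    (hpos : ∀ i : B, 0 < L (cs.simple i)) {ω : List B} (hω : ¬cs.IsReduced ω) :
    L (cs.wordProd ω) < (ω.map fun i => L (cs.simple i)).sum := by
  induction ω with
  | nil => exact (hω (by simp [IsReduced])).elim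
  | cons i ω ih =>
    rw [cs.wordProd_cons, List.map_cons, List.sum_cons]
    rcases cs.length_simple_mul (cs.wordProd ω) i with h | h
    · have hω' : ¬cs.IsReduced ω := by
        simp only [IsReduced, cs.wordProd_cons, h, List.length_cons] at hω ⊢
        omega
      rw [hL.simple_mul_of_length_eq h]
      exact add_lt_add_right (ih hω') _
    · calc L (cs.simple i * cs.wordProd ω) < L (cs.wordProd ω) :=
            hL.simple_mul_lt_of_length_eq hpos h
        _ ≤ _ := hL.wordProd_le hpos ω
        _ ≤ _ := le_add_of_nonneg_left (hpos i).le

theorem wordProd_eq_iff_isReduced (hL : cs.IsWeightFunction L)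
    (hpos : ∀ i : B, 0 < L (cs.simple i)) (ω : List B) :
    L (cs.wordProd ω) = (ω.map fun i => L (cs.simple i)).sum ↔ cs.IsReduced ω := by
  refine ⟨fun h => ?_, hL.wordProd_of_isReduced⟩
  by_contra hω
  exact (hL.wordProd_lt_of_not_isReduced hpos hω).ne h

end IsWeightFunction

end CoxeterSystem

theorem stmt6 {B W Γ : Type*} [Group W] [AddCommGroup Γ] [LinearOrder Γ] [IsOrderedAddMonoid Γ]
    {M : CoxeterMatrix B} (cs : CoxeterSystem M W) (L : W → Γ)
    (hweight : ∀ u v : W, cs.length (u * v) = cs.length u + cs.length v →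
      L (u * v) = L u + L v)
    (hpos : ∀ i : B, 0 < L (cs.simple i))
    (l : List W) :
    L l.prod = (l.map L).sum ↔ (cs.length l.prod : ℕ) = (l.map cs.length).sum := by
  have hL : cs.IsWeightFunction L := hweight
  obtain ⟨ω, hprod, hlen, hsum⟩ := hL.exists_word_of_list l
  rw [← hprod, ← hlen, ← hsum]
  exact hL.wordProd_eq_iff_isReduced hpos ω
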